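/- arXiv:1309.6301 — 2 statements merged into one kernel-verified Lean document; each statement's English description precedes it below -/
import Mathlib

section
/- Let ṽ ∈ ℝⁿ satisfy |ṽ₁| ≥ |ṽ₂| ≥ … ≥ |ṽₙ| ≥ 0 with ṽᵢ ≥ 0, and let b be the unique minimizer of r(x) + (1/2)‖x − ṽ‖₂² over x ∈ ℝⁿ with r the OSCAR regularizer. Then b₁ ≥ b₂ ≥ … ≥ bₙ ≥ 0; moreover if ṽ_p = ṽ_q for some p, q then b_p = b_q. -/
/-!
The prox objective `r x + ½‖x - v‖²` of a convex `r` is strongly convex, so its minimiser `b` is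
unique: any point whose objective value is at most that of `b` equals `b`. OSCAR is convex,
invariant under permutations of the coordinates, and invariant under `x ↦ |x|`. Swapping the
coordinates `i` and `j` of `b` therefore changes the objective by exactly `(vᵢ - vⱼ)(bᵢ - bⱼ)`,
which must be nonnegative, and when `vᵢ = vⱼ` the swapped point is a minimiser too, so `bᵢ = bⱼ`.
Replacing `b` by `|b|` does not increase the objective because `v ≥ 0`, so `b = |b|`.
-/

open Finset

/-- The OSCAR regularizer r(x) = λ₁‖x‖₁ + λ₂ ∑_{i<j} max{|xᵢ|,|xⱼ|} on ℝⁿ. -/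
noncomputable def oscar (n : ℕ) (l1 l2 : ℝ) (x : Fin n → ℝ) : ℝ :=
  l1 * ∑ i, |x i| +
  l2 * ∑ p ∈ Finset.univ.filter (fun p : Fin n × Fin n => p.1 < p.2), max |x p.1| |x p.2|

theorem ConvexOn.fun_sum {𝕜 E β ι : Type*} [Semiring 𝕜] [PartialOrder 𝕜] [AddCommMonoid E]
    [SMul 𝕜 E] [AddCommMonoid β] [PartialOrder β] [IsOrderedAddMonoid β] [DistribMulAction 𝕜 β]
    {s : Set E} {t : Finset ι} {f : ι → E → β} (hs : Convex 𝕜 s)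
    (hf : ∀ i ∈ t, ConvexOn 𝕜 s (f i)) : ConvexOn 𝕜 s fun x => ∑ i ∈ t, f i x := by
  refine ⟨hs, fun x hx y hy a b ha hb hab => ?_⟩
  simp only [smul_sum, ← sum_add_distrib]
  exact sum_le_sum fun i hi => (hf i hi).2 hx hy ha hb hab

section PairSum

variable {α β : Type*} [Fintype α] [LinearOrder α] [AddCommMonoid β]

theorem sum_filter_lt_eq_sum_sym2 (g : α → α → β) (hg : ∀ a b, g a b = g b a) :
    ∑ p ∈ univ.filter (fun p : α × α => p.1 < p.2), g p.1 p.2 =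
      ∑ s ∈ (univ : Finset α).sym2 with ¬ s.IsDiag, Sym2.lift ⟨g, hg⟩ s := by
  rw [sum_sym2_filter_not_isDiag]
  refine sum_congr ?_ fun _ _ => rfl
  ext p
  simpa using fun h : p.1 < p.2 => h.ne

theorem sum_filter_lt_comp_perm (g : α → α → β) (hg : ∀ a b, g a b = g b a) (σ : Equiv.Perm α) :
    ∑ p ∈ univ.filter (fun p : α × α => p.1 < p.2), g (σ p.1) (σ p.2) =
      ∑ p ∈ univ.filter (fun p : α × α => p.1 < p.2), g p.1 p.2 := by
  rw [sum_filter_lt_eq_sum_sym2 (fun a b => g (σ a) (σ b)) fun a b => hg _ _,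
    sum_filter_lt_eq_sum_sym2 g hg]
  refine sum_nbij' (Sym2.map σ) (Sym2.map σ.symm) ?_ ?_ ?_ ?_ ?_ <;> intro s hs
  · simpa [Sym2.isDiag_map σ.injective] using hs
  · simpa [Sym2.isDiag_map σ.symm.injective] using hs
  · simp [Sym2.map_map]
  · simp [Sym2.map_map]
  · induction s using Sym2.ind with | _ a b => rfl

end PairSum

section Prox

variable {ι : Type*} [Fintype ι] {r : (ι → ℝ) → ℝ} {v b : ι → ℝ}

noncomputable def proxObjective (r : (ι → ℝ) → ℝ) (v x : ι → ℝ) : ℝ :=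
  r x + (1/2) * ∑ i, (x i - v i)^2

def IsProx (r : (ι → ℝ) → ℝ) (v b : ι → ℝ) : Prop :=
  ∀ x, proxObjective r v b ≤ proxObjective r v x

theorem sum_sq_sub_midpoint (v b c : ι → ℝ) :
    ∑ i, (((1/2 : ℝ) • b + (1/2 : ℝ) • c) i - v i)^2 =
      (∑ i, (b i - v i)^2 + ∑ i, (c i - v i)^2) / 2 - (∑ i, (b i - c i)^2) / 4 := by
  simp only [sum_div, ← sum_add_distrib, ← sum_sub_distrib]
  exact sum_congr rfl fun i _ => by simp only [Pi.add_apply, Pi.smul_apply, smul_eq_mul]; ring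

theorem IsProx.eq_of_le (hconv : ConvexOn ℝ Set.univ r) (hb : IsProx r v b) {c : ι → ℝ}
    (hc : proxObjective r v c ≤ proxObjective r v b) : c = b := by
  have hmid := hconv.2 (Set.mem_univ b) (Set.mem_univ c) (by norm_num : (0 : ℝ) ≤ 1/2)
    (by norm_num : (0 : ℝ) ≤ 1/2) (add_halves 1)
  have hle := hb ((1/2 : ℝ) • b + (1/2 : ℝ) • c)
  simp only [proxObjective, sum_sq_sub_midpoint, smul_eq_mul] at hle hc hmid
  have hsq : ∑ i, (b i - c i)^2 = 0 :=
    le_antisymm (by linarith) (sum_nonneg fun i _ => sq_nonneg _)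
  funext i
  have := congrFun ((Fintype.sum_eq_zero_iff_of_nonneg fun i => sq_nonneg (b i - c i)).1 hsq) i
  simp only [Pi.zero_apply, sq_eq_zero_iff, sub_eq_zero] at this
  exact this.symm

theorem sum_sq_comp_swap_sub [DecidableEq ι] (b v : ι → ℝ) {i j : ι} (hij : i ≠ j) :
    ∑ k, (b (Equiv.swap i j k) - v k)^2 =
      ∑ k, (b k - v k)^2 + 2 * ((v i - v j) * (b i - b j)) := by
  rw [← sub_eq_iff_eq_add', ← sum_sub_distrib, Fintype.sum_eq_add i j hij]
  · simp only [Equiv.swap_apply_left, Equiv.swap_apply_right]; ring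
  · rintro k ⟨hki, hkj⟩
    rw [Equiv.swap_apply_of_ne_of_ne hki hkj, sub_self]

theorem proxObjective_comp_swap [DecidableEq ι] (hperm : ∀ σ : Equiv.Perm ι, ∀ x, r (x ∘ σ) = r x)
    {i j : ι} (hij : i ≠ j) :
    proxObjective r v (b ∘ Equiv.swap i j) = proxObjective r v b + (v i - v j) * (b i - b j) := by
  simp only [proxObjective, hperm, Function.comp_apply, sum_sq_comp_swap_sub b v hij]
  ring

theorem IsProx.sub_mul_sub_nonneg (hperm : ∀ σ : Equiv.Perm ι, ∀ x, r (x ∘ σ) = r x)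
    (hb : IsProx r v b) (i j : ι) : 0 ≤ (v i - v j) * (b i - b j) := by
  classical
  rcases eq_or_ne i j with rfl | hij
  · simp
  have := hb (b ∘ Equiv.swap i j)
  rw [proxObjective_comp_swap hperm hij] at this
  linarith

theorem IsProx.apply_eq_apply_of_eq (hconv : ConvexOn ℝ Set.univ r)
    (hperm : ∀ σ : Equiv.Perm ι, ∀ x, r (x ∘ σ) = r x) (hb : IsProx r v b) {i j : ι}
    (hv : v i = v j) : b i = b j := by
  classical
  rcases eq_or_ne i j with rfl | hij
  · rfl
  have hswap := hb.eq_of_le hconv <|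
    (proxObjective_comp_swap hperm hij).le.trans (by rw [hv, sub_self, zero_mul, add_zero])
  simpa using congrFun hswap j

theorem IsProx.apply_le_apply_of_le (hconv : ConvexOn ℝ Set.univ r)
    (hperm : ∀ σ : Equiv.Perm ι, ∀ x, r (x ∘ σ) = r x) (hb : IsProx r v b) {i j : ι}
    (hv : v j ≤ v i) : b j ≤ b i := by
  rcases hv.eq_or_lt with hv | hv
  · exact (hb.apply_eq_apply_of_eq hconv hperm hv).le
  · exact sub_nonneg.1 (nonneg_of_mul_nonneg_right (hb.sub_mul_sub_nonneg hperm i j) (sub_pos.2 hv))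

theorem IsProx.nonneg (hconv : ConvexOn ℝ Set.univ r) (habs : ∀ x, r (fun i => |x i|) = r x)
    (hv : ∀ i, 0 ≤ v i) (hb : IsProx r v b) (i : ι) : 0 ≤ b i := by
  have hb_abs : (fun i => |b i|) = b := hb.eq_of_le hconv <| by
    simp only [proxObjective, habs]
    refine add_le_add le_rfl (mul_le_mul_of_nonneg_left (sum_le_sum fun k _ => sq_le_sq.2 ?_)
      (by norm_num))
    simpa [abs_of_nonneg (hv k)] using abs_abs_sub_abs_le_abs_sub (b k) (v k)
  rw [← hb_abs]
  exact abs_nonneg _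

end Prox

section Oscar

variable {n : ℕ} {l1 l2 : ℝ}

theorem convexOn_oscar (h1 : 0 ≤ l1) (h2 : 0 ≤ l2) : ConvexOn ℝ Set.univ (oscar n l1 l2) := by
  have habs (i : Fin n) : ConvexOn ℝ Set.univ fun x : Fin n → ℝ => |x i| :=
    (convexOn_univ_norm (E := ℝ)).comp_linearMap
      (LinearMap.proj (R := ℝ) (φ := fun _ : Fin n => ℝ) i)
  exact ((ConvexOn.fun_sum convex_univ fun i _ => habs i).smul h1).add
    ((ConvexOn.fun_sum convex_univ fun p _ => (habs p.1).sup (habs p.2)).smul h2)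

theorem oscar_comp_perm (σ : Equiv.Perm (Fin n)) (x : Fin n → ℝ) :
    oscar n l1 l2 (x ∘ σ) = oscar n l1 l2 x := by
  simp only [oscar, Function.comp_apply, Equiv.sum_comp σ fun i => |x i|,
    sum_filter_lt_comp_perm (fun i j => max |x i| |x j|) (fun _ _ => max_comm _ _)]

@[simp]
theorem oscar_abs (x : Fin n → ℝ) : oscar n l1 l2 (fun i => |x i|) = oscar n l1 l2 x := by
  simp only [oscar, abs_abs]

end Oscar

/-- Theorem 2(i): for nonnegative, nonincreasing ṽ, the OSCAR prox is nonincreasing,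
nonnegative, and equal entries of ṽ give equal entries of b. -/
theorem oscar_prox_sorted (n : ℕ) (l1 l2 : ℝ) (h1 : 0 ≤ l1) (h2 : 0 ≤ l2)
    (v b : Fin n → ℝ) (hv0 : ∀ i, 0 ≤ v i)
    (hvsorted : ∀ i j : Fin n, i ≤ j → v j ≤ v i)
    (hb : ∀ x : Fin n → ℝ,
      oscar n l1 l2 b + (1/2) * ∑ i, (b i - v i)^2 ≤
        oscar n l1 l2 x + (1/2) * ∑ i, (x i - v i)^2) :
    (∀ i j : Fin n, i ≤ j → b j ≤ b i) ∧ (∀ i, 0 ≤ b i) ∧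
      (∀ p q : Fin n, v p = v q → b p = b q) := by
  have hprox : IsProx (oscar n l1 l2) v b := hb
  have hconv : ConvexOn ℝ Set.univ (oscar n l1 l2) := convexOn_oscar h1 h2
  exact ⟨fun i j hij => hprox.apply_le_apply_of_le hconv oscar_comp_perm (hvsorted i j hij),
    hprox.nonneg hconv oscar_abs hv0,
    fun p q hpq => hprox.apply_eq_apply_of_eq hconv oscar_comp_perm hpq⟩
end

section
/- Suppose ṽ ∈ ℝⁿ is sorted by nonincreasing magnitude and satisfies the gap condition |ṽᵢ| − |ṽ_{i+1}| ≥ λ₂ for all i = 1,…,n−1. Let u*ᵢ = sign(ṽᵢ)·max{|ṽᵢ| − wᵢ, 0} with wᵢ = λ₁ + λ₂(n − i), λ₁, λ₂ ≥ 0. Then u* is the proximity operator of the OSCAR regularizer at ṽ, i.e., u* minimizes r(x) + (1/2)‖x − ṽ‖₂². -/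
/-!
For a vector whose magnitudes are nonincreasing, every pair `i < j` contributes `|xᵢ|` to the
pairwise term, so `r(x) = ∑ wᵢ |xᵢ|` with `wᵢ = λ₁ + λ₂ (n - 1 - i)` (0-indexed); for an
arbitrary `x` the same count gives `r(x) ≥ ∑ wᵢ |xᵢ|`, since `max |xᵢ| |xⱼ| ≥ |xᵢ|`. Hence the
objective dominates the separable weighted-ℓ₁ objective, whose minimizer is soft thresholding
with weights `wᵢ`. The gap condition `|ṽᵢ| - |ṽᵢ₊₁| ≥ λ₂ = wᵢ - wᵢ₊₁` makes the magnitudes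
`max (|ṽᵢ| - wᵢ) 0` of that minimizer nonincreasing, so on it the two objectives agree.
-/

open Finset

noncomputable def softThreshold (w a : ℝ) : ℝ :=
  (if 0 ≤ a then (1 : ℝ) else -1) * max (|a| - w) 0

lemma abs_softThreshold (w a : ℝ) : |softThreshold w a| = max (|a| - w) 0 := by
  unfold softThreshold
  rw [abs_mul, abs_of_nonneg (le_max_right (|a| - w) 0)]
  split_ifs <;> simp

lemma mul_abs_softThreshold_add_sq_le (w a t : ℝ) (hw : 0 ≤ w) :
    w * |softThreshold w a| + 1 / 2 * (softThreshold w a - a) ^ 2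
      ≤ w * |t| + 1 / 2 * (t - a) ^ 2 := by
  rw [abs_softThreshold]
  unfold softThreshold
  rcases le_or_gt 0 a with ha | ha
  · rw [if_pos ha, abs_of_nonneg ha, one_mul]
    rcases le_or_gt (a - w) 0 with h | h
    · rw [max_eq_right h]
      nlinarith [mul_nonneg (sub_nonneg.2 (by linarith : a ≤ w)) (abs_nonneg t),
        mul_nonneg ha (sub_nonneg.2 (le_abs_self t)), sq_nonneg t]
    · rw [max_eq_left h.le]
      nlinarith [sq_nonneg (w + t - a), mul_nonneg hw (sub_nonneg.2 (le_abs_self t))]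
  · rw [if_neg (not_le.2 ha), abs_of_neg ha]
    rcases le_or_gt (-a - w) 0 with h | h
    · rw [max_eq_right h]
      nlinarith [mul_nonneg (sub_nonneg.2 (by linarith : -a ≤ w)) (abs_nonneg t),
        mul_nonneg (neg_nonneg.2 ha.le) (sub_nonneg.2 (neg_abs_le t)), sq_nonneg t]
    · rw [max_eq_left h.le]
      nlinarith [sq_nonneg (t - a - w), mul_nonneg hw (sub_nonneg.2 (neg_abs_le t))]

lemma sum_mul_abs_softThreshold_add_sq_le {ι : Type*} [Fintype ι] (w v x : ι → ℝ)
    (hw : ∀ i, 0 ≤ w i) :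
    ∑ i, w i * |softThreshold (w i) (v i)| + 1 / 2 * ∑ i, (softThreshold (w i) (v i) - v i) ^ 2
      ≤ ∑ i, w i * |x i| + 1 / 2 * ∑ i, (x i - v i) ^ 2 := by
  simp only [mul_sum, ← sum_add_distrib]
  exact sum_le_sum fun i _ => mul_abs_softThreshold_add_sq_le (w i) (v i) (x i) (hw i)

lemma sum_filter_lt_fst {M : Type*} [AddCommMonoid M] {n : ℕ} (f : Fin n → M) :
    ∑ p ∈ univ.filter (fun p : Fin n × Fin n => p.1 < p.2), f p.1
      = ∑ i : Fin n, (n - 1 - (i : ℕ)) • f i := by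
  rw [sum_filter, Fintype.sum_prod_type]
  refine sum_congr rfl fun i _ => ?_
  dsimp only
  rw [← sum_filter, sum_const, filter_lt_eq_Ioi, Fin.card_Ioi]

lemma Fin.antitone_of_succ_le {α : Type*} [Preorder α] {n : ℕ} {f : Fin n → α}
    (h : ∀ (i : ℕ) (hi : i + 1 < n), f ⟨i + 1, hi⟩ ≤ f ⟨i, Nat.lt_of_succ_lt hi⟩) :
    Antitone f := by
  cases n with
  | zero => exact fun i => i.elim0
  | succ n => exact Fin.antitone_iff_succ_le.2 fun i => h i (by omega)

noncomputable def oscarWeight (n : ℕ) (l1 l2 : ℝ) (i : Fin n) : ℝ :=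
  l1 + l2 * ((n : ℝ) - 1 - (i : ℕ))

section oscarWeight

variable {n : ℕ} {l1 l2 : ℝ}

lemma oscarWeight_nonneg (h1 : 0 ≤ l1) (h2 : 0 ≤ l2) (i : Fin n) :
    0 ≤ oscarWeight n l1 l2 i := by
  have : (i : ℝ) + 1 ≤ n := by exact_mod_cast i.isLt
  unfold oscarWeight
  nlinarith

lemma sum_oscarWeight_mul (x : Fin n → ℝ) :
    ∑ i, oscarWeight n l1 l2 i * x i
      = l1 * ∑ i, x i + l2 * ∑ p ∈ univ.filter (fun p : Fin n × Fin n => p.1 < p.2), x p.1 := by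
  rw [sum_filter_lt_fst, mul_sum, mul_sum, ← sum_add_distrib]
  refine sum_congr rfl fun i _ => ?_
  have := i.isLt
  rw [nsmul_eq_mul, Nat.cast_sub (by omega), Nat.cast_sub (by omega)]
  simp only [oscarWeight, Nat.cast_one]
  ring

lemma sum_oscarWeight_mul_abs_le_oscar (h2 : 0 ≤ l2) (x : Fin n → ℝ) :
    ∑ i, oscarWeight n l1 l2 i * |x i| ≤ oscar n l1 l2 x := by
  rw [sum_oscarWeight_mul, oscar]
  gcongr
  exact le_max_left _ _

lemma oscar_eq_sum_oscarWeight_mul_abs {x : Fin n → ℝ} (hx : Antitone fun i => |x i|) :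
    oscar n l1 l2 x = ∑ i, oscarWeight n l1 l2 i * |x i| := by
  rw [sum_oscarWeight_mul, oscar]
  congr 2
  exact sum_congr rfl fun p hp => max_eq_left (hx (mem_filter.1 hp).2.le)

lemma antitone_abs_softThreshold_oscarWeight {v : Fin n → ℝ}
    (hgap : ∀ i : ℕ, (h : i + 1 < n) → l2 ≤ |v ⟨i, Nat.lt_of_succ_lt h⟩| - |v ⟨i+1, h⟩|) :
    Antitone fun i => |softThreshold (oscarWeight n l1 l2 i) (v i)| := by
  refine Fin.antitone_of_succ_le fun i hi => ?_
  simp only [abs_softThreshold, oscarWeight]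
  gcongr ?_ ⊔ _
  push_cast
  linarith [hgap i hi]

end oscarWeight

theorem oscar_prox_under_gap_general (n : ℕ) (l1 l2 : ℝ) (h1 : 0 ≤ l1) (h2 : 0 ≤ l2)
    (v : Fin n → ℝ)
    (hgap : ∀ i : ℕ, (h : i + 1 < n) → l2 ≤ |v ⟨i, Nat.lt_of_succ_lt h⟩| - |v ⟨i+1, h⟩|) :
    ∀ x : Fin n → ℝ,
      oscar n l1 l2
          (fun i => (if 0 ≤ v i then (1:ℝ) else -1) *
            max (|v i| - (l1 + l2 * ((n : ℝ) - 1 - (i : ℕ)))) 0) +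
        (1/2) * ∑ i, ((if 0 ≤ v i then (1:ℝ) else -1) *
            max (|v i| - (l1 + l2 * ((n : ℝ) - 1 - (i : ℕ)))) 0 - v i)^2 ≤
      oscar n l1 l2 x + (1/2) * ∑ i, (x i - v i)^2 := by
  intro x
  set w := oscarWeight n l1 l2
  change oscar n l1 l2 (fun i => softThreshold (w i) (v i))
      + 1 / 2 * ∑ i, (softThreshold (w i) (v i) - v i) ^ 2 ≤ _
  calc _ = ∑ i, w i * |softThreshold (w i) (v i)|
          + 1 / 2 * ∑ i, (softThreshold (w i) (v i) - v i) ^ 2 := by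
        rw [oscar_eq_sum_oscarWeight_mul_abs (antitone_abs_softThreshold_oscarWeight hgap)]
    _ ≤ ∑ i, w i * |x i| + 1 / 2 * ∑ i, (x i - v i) ^ 2 :=
        sum_mul_abs_softThreshold_add_sq_le w v x (oscarWeight_nonneg h1 h2)
    _ ≤ _ := by grw [sum_oscarWeight_mul_abs_le_oscar h2 x]

/-- Under the gap condition, componentwise soft thresholding with weights
wᵢ = λ₁ + λ₂(n − i) gives the OSCAR proximity operator at ṽ. -/
theorem oscar_prox_under_gap (n : ℕ) (l1 l2 : ℝ) (h1 : 0 ≤ l1) (h2 : 0 ≤ l2)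
    (v : Fin n → ℝ)
    (hsorted : ∀ i j : Fin n, i ≤ j → |v j| ≤ |v i|)
    (hgap : ∀ i : ℕ, (h : i + 1 < n) → l2 ≤ |v ⟨i, Nat.lt_of_succ_lt h⟩| - |v ⟨i+1, h⟩|) :
    ∀ x : Fin n → ℝ,
      oscar n l1 l2
          (fun i => (if 0 ≤ v i then (1:ℝ) else -1) *
            max (|v i| - (l1 + l2 * ((n : ℝ) - 1 - (i : ℕ)))) 0) +
        (1/2) * ∑ i, ((if 0 ≤ v i then (1:ℝ) else -1) *
            max (|v i| - (l1 + l2 * ((n : ℝ) - 1 - (i : ℕ)))) 0 - v i)^2 ≤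
      oscar n l1 l2 x + (1/2) * ∑ i, (x i - v i)^2 :=
  oscar_prox_under_gap_general n l1 l2 h1 h2 v hgap
end
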